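/- Eckart–Young-type rigidity for strict-rank projections onto the rank-≤ r set of quaternion matrices: if Y ∈ Π_S(Y + T), where Π_S denotes the set of Frobenius-nearest points in S = {M ∈ ℚ^{m×n} : rank(M) ≤ r}, and rank(Y) < r, then T = 0. -/
import Mathlib

open Quaternion

/-- Squared Frobenius norm of a quaternion matrix. -/
noncomputable def frobSq {m n : ℕ} (A : Matrix (Fin m) (Fin n) ℍ[ℝ]) : ℝ :=
  ∑ p, ∑ q, ‖A p q‖ ^ 2

/-- The Frobenius norm of a quaternion matrix. -/
noncomputable def frobNorm {m n : ℕ} (A : Matrix (Fin m) (Fin n) ℍ[ℝ]) : ℝ :=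
  Real.sqrt (frobSq A)

/-- The R-product (real product) of two quaternion matrices, i.e. `Re Tr(A*B)`. -/
def RprodM {m n : ℕ} (A B : Matrix (Fin m) (Fin n) ℍ[ℝ]) : ℝ :=
  ∑ p, ∑ q, ((A p q).re * (B p q).re + (A p q).imI * (B p q).imI +
    (A p q).imJ * (B p q).imJ + (A p q).imK * (B p q).imK)

/-- The rank of a quaternion matrix: the dimension over ℍ of the span of its columns. -/
noncomputable def qrank {m n : ℕ} (A : Matrix (Fin m) (Fin n) ℍ[ℝ]) : ℕ :=
  Module.finrank ℍ[ℝ] (Submodule.span ℍ[ℝ] (Set.range fun j : Fin n => fun i : Fin m => A i j))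

lemma frobSq_nonneg {m n : ℕ} (A : Matrix (Fin m) (Fin n) ℍ[ℝ]) : 0 ≤ frobSq A := by
  apply Finset.sum_nonneg; intro i _; apply Finset.sum_nonneg; intro j _; positivity

lemma qrank_add_single {m n : ℕ} (Y : Matrix (Fin m) (Fin n) ℍ[ℝ]) (p : Fin m) (q : Fin n)
    (c : ℍ[ℝ]) (hc : c ≠ 0) :
    qrank (Y + Matrix.of fun i j => if i = p ∧ j = q then c else 0) ≤ qrank Y + 1 := by
  set M : Matrix (Fin m) (Fin n) ℍ[ℝ] :=
    Y + Matrix.of fun i j => if i = p ∧ j = q then c else 0 with hMdef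
  set w : Fin m → ℍ[ℝ] := Pi.single p c with hw
  have hwne : w ≠ 0 := by
    intro h
    have := congrFun h p
    simp [hw, Pi.single_eq_same] at this
    exact hc this
  set S := Submodule.span ℍ[ℝ] (Set.range fun j : Fin n => fun i : Fin m => Y i j) with hS
  have hle : Submodule.span ℍ[ℝ] (Set.range fun j : Fin n => fun i : Fin m => M i j) ≤
      S ⊔ Submodule.span ℍ[ℝ] {w} := by
    rw [Submodule.span_le]
    rintro x ⟨j, rfl⟩
    by_cases hj : j = q
    · have heq : (fun j' : Fin n => fun i : Fin m => M i j') j = (fun i => Y i j) + w := by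
        funext i
        by_cases hi : i = p <;>
          simp [hMdef, hi, hj, hw, Pi.single_apply]
      have hmem : (fun i => Y i j) + w ∈ S ⊔ Submodule.span ℍ[ℝ] {w} :=
        Submodule.add_mem_sup (Submodule.subset_span ⟨j, rfl⟩)
          (Submodule.mem_span_singleton_self w)
      exact heq ▸ hmem
    · have heq : (fun j' : Fin n => fun i : Fin m => M i j') j = fun i => Y i j := by
        funext i; simp [hMdef, hj]
      have hmem : (fun i => Y i j) ∈ S ⊔ Submodule.span ℍ[ℝ] {w} :=
        Submodule.mem_sup_left (Submodule.subset_span ⟨j, rfl⟩)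
      exact heq ▸ hmem
  calc qrank M
      ≤ Module.finrank ℍ[ℝ] ↥(S ⊔ Submodule.span ℍ[ℝ] {w}) := Submodule.finrank_mono hle
    _ ≤ Module.finrank ℍ[ℝ] S + Module.finrank ℍ[ℝ] (Submodule.span ℍ[ℝ] {w}) :=
        Submodule.finrank_add_le_finrank_add_finrank _ _
    _ = qrank Y + 1 := by rw [finrank_span_singleton hwne]; rfl

theorem projection_strict_rank_rigidity (m n r : ℕ)
    (Y T : Matrix (Fin m) (Fin n) ℍ[ℝ])
    (hYS : qrank Y ≤ r)
    (hproj : ∀ M : Matrix (Fin m) (Fin n) ℍ[ℝ], qrank M ≤ r →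
      frobNorm (Y - (Y + T)) ≤ frobNorm (M - (Y + T)))
    (hrank : qrank Y < r) :
    T = 0 := by
  by_contra hT
  obtain ⟨p, q, hpq⟩ : ∃ p q, T p q ≠ 0 := by
    by_contra h
    push_neg at h
    exact hT (by funext i j; exact h i j)
  set E : Matrix (Fin m) (Fin n) ℍ[ℝ] := Matrix.of fun i j => if i = p ∧ j = q then T p q else 0
    with hE
  have hM : qrank (Y + E) ≤ r := by
    have h := qrank_add_single Y p q (T p q) hpq
    rw [← hE] at h
    omega
  have h1 := hproj (Y + E) hM
  have hYT : Y - (Y + T) = -T := by abel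
  have hMT : (Y + E) - (Y + T) = E - T := by abel
  rw [hYT, hMT] at h1
  have hfsq : frobSq (E - T) = frobSq (-T) - ‖T p q‖ ^ 2 := by
    have hneg : frobSq (-T : Matrix (Fin m) (Fin n) ℍ[ℝ]) = frobSq T := by
      simp [frobSq]
    rw [hneg, frobSq, frobSq]
    have key : ∀ i j, ‖(E - T) i j‖ ^ 2 =
        ‖T i j‖ ^ 2 - (if i = p ∧ j = q then ‖T p q‖ ^ 2 else 0) := by
      intro i j
      by_cases h : i = p ∧ j = q
      · obtain ⟨rfl, rfl⟩ := h
        simp [hE]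
      · simp only [hE, Matrix.sub_apply, Matrix.of_apply, if_neg h, zero_sub, norm_neg]
        ring
    have step1 : ∑ i, ∑ j, ‖(E - T) i j‖ ^ 2
        = ∑ i, ∑ j, (‖T i j‖ ^ 2 - if i = p ∧ j = q then ‖T p q‖ ^ 2 else 0) :=
      Finset.sum_congr rfl fun i _ => Finset.sum_congr rfl fun j _ => key i j
    rw [step1]
    simp only [Finset.sum_sub_distrib]
    congr 1
    simp [ite_and, Finset.sum_ite_eq]
  have hlt : frobNorm (E - T) < frobNorm (-T) := by
    rw [frobNorm, frobNorm]
    apply Real.sqrt_lt_sqrt (frobSq_nonneg _)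
    rw [hfsq]
    have : (0:ℝ) < ‖T p q‖ ^ 2 := pow_pos (norm_pos_iff.mpr hpq) 2
    linarith
  linarith
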